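/- Let d ≥ 1, p ≥ 1, let g : Fin d → Fin p be a surjective grouping map encoding a partition ω of d, and let n : Fin p → ℕ with n k ≥ 1. Let S^ω be the subspace of ω-partially-symmetric tensors T : (Π i : Fin d, Fin (n (g i))) → ℝ, and let C be the set of all rank-one tensors (including zero) in the full tensor space. Then: (i) every T ∈ S^ω has a best rank one approximation (a nearest point in C in Hilbert–Schmidt norm) which is ω-symmetric, i.e., of the form idx ↦ ε · ∏_i (z (g i))(idx i) for some ε ∈ {+1, −1} and z k ∈ ℝ^{n k}; and (ii) for almost every T ∈ S^ω (with respect to Haar/Lebesgue measure on S^ω) the best rank one approximation of T is unique and is ω-symmetric. -/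

import Mathlib

open MeasureTheory

/-- The space of `d`-mode real tensors with dimensions `n (g i)` in mode `i`,
equipped with the Hilbert–Schmidt (Euclidean) norm. -/
abbrev TensorSpace (d p : ℕ) (g : Fin d → Fin p) (n : Fin p → ℕ) :=
  EuclideanSpace ℝ (∀ i : Fin d, Fin (n (g i)))

/-- The subspace `S^ω` of tensors which are partially symmetric with respect to
the partition of `[d]` encoded by the grouping map `g`. -/
def Somega (d p : ℕ) (g : Fin d → Fin p) (n : Fin p → ℕ) :
    Submodule ℝ (TensorSpace d p g n) where
  carrier := {T | ∀ σ : Equiv.Perm (Fin d), ∀ hσ : ∀ j, g (σ j) = g j,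
    ∀ idx : ∀ i : Fin d, Fin (n (g i)),
      T (fun j => Fin.cast (congrArg n (hσ j)) (idx (σ j))) = T idx}
  add_mem' := by
    intro a b ha hb σ hσ idx
    show a _ + b _ = a idx + b idx
    rw [ha σ hσ idx, hb σ hσ idx]
  zero_mem' := by intro σ hσ idx; rfl
  smul_mem' := by
    intro c a ha σ hσ idx
    show c • a _ = c • a idx
    rw [ha σ hσ idx]

/-- The set of rank one tensors (including zero). -/
def rankOneSet (d p : ℕ) (g : Fin d → Fin p) (n : Fin p → ℕ) :
    Set (TensorSpace d p g n) :=
  {S | ∃ w : ∀ i : Fin d, Fin (n (g i)) → ℝ, ∀ idx, S idx = ∏ i, w i (idx i)}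

/-- The set of `ω`-symmetric rank one tensors `idx ↦ ε ∏ᵢ (z (g i))(idxᵢ)`,
`ε = ±1`. -/
def omegaSymRankOne (d p : ℕ) (g : Fin d → Fin p) (n : Fin p → ℕ) :
    Set (TensorSpace d p g n) :=
  {S | ∃ ε : ℝ, (ε = 1 ∨ ε = -1) ∧ ∃ z : ∀ k, Fin (n k) → ℝ,
    ∀ idx, S idx = ε * ∏ i, z (g i) (idx i)}

/-!
For `T ∈ S^ω` the multilinear form `Ψ v = ⟪T, v₁ ⊗ ⋯ ⊗ v_d⟫` is symmetric in any two slots of the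
same group, and `Ψ w • (w₁ ⊗ ⋯ ⊗ w_d)` is a best rank one approximation of `T` whenever `w` is a
tuple of unit vectors maximising `|Ψ|`. Among these maximisers pick one that also maximises the
potential `∑ₖ ‖∑_{g i = k} wᵢ‖²`. For slots `i ≠ j` of one group, with `x = wᵢ` and `y = w_j`,
the symmetric bilinear form `B` obtained by freezing the other slots satisfies
`B x = Ψ w • ⟪y, ·⟫` and `B y = Ψ w • ⟪x, ·⟫` (a functional attains its norm only along its
Riesz vector), so `|B a a| = |Ψ w|` for the unit vectors `a` along `x + y` and `x - y`. Putting
`a` into both slots keeps the tuple maximising, and unless `x = ± y` one of the two choices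
strictly increases the potential. Hence within each group all `wᵢ` agree up to sign, and the
approximation is `ω`-symmetric.

For (ii), the distance to the rank one tensors, restricted to `S^ω`, is Lipschitz and hence
differentiable almost everywhere (Rademacher). At such a `T` every nearest point `S` gives the
derivative `2 ⟪T - S, ·⟫` of the squared distance on `S^ω`, so two nearest points differ by a
vector orthogonal to `S^ω`. One of them is `ω`-symmetric, and nearest points on a cone satisfy
`⟪T, S⟫ = ‖S‖²`; together these force the two nearest points to coincide.
-/

open scoped RealInnerProductSpace

noncomputable section

theorem IsCompact.exists_isMaxOn_lex {X : Type*} [TopologicalSpace X] {K : Set X}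
    (hK : IsCompact K) (hne : K.Nonempty) {f φ : X → ℝ} (hf : Continuous f) (hφ : Continuous φ) :
    ∃ w ∈ K, IsMaxOn f K w ∧ ∀ v ∈ K, f v = f w → φ v ≤ φ w := by
  obtain ⟨w₀, hw₀, hmax₀⟩ := hK.exists_isMaxOn hne hf.continuousOn
  obtain ⟨w, ⟨hwK, hw⟩, hmax⟩ :=
    (hK.inter_right (isClosed_eq hf continuous_const)).exists_isMaxOn ⟨w₀, hw₀, rfl⟩
      (s := K ∩ {v | f v = f w₀}) hφ.continuousOn
  have hw : f w = f w₀ := hw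
  exact ⟨w, hwK, fun v hv => hw ▸ hmax₀ hv, fun v hv hfv => hmax ⟨hv, hfv.trans hw⟩⟩

theorem MultilinearMap.abs_le_mul_prod_norm {ι : Type*} [Fintype ι] {M : ι → Type*}
    [∀ i, NormedAddCommGroup (M i)] [∀ i, NormedSpace ℝ (M i)] (Ψ : MultilinearMap ℝ M ℝ)
    {c : ℝ} (hc : 0 ≤ c) (h : ∀ u : ∀ i, M i, (∀ i, ‖u i‖ = 1) → |Ψ u| ≤ c) (v : ∀ i, M i) :
    |Ψ v| ≤ c * ∏ i, ‖v i‖ := by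
  by_cases hv : ∃ i, v i = 0
  · obtain ⟨i, hi⟩ := hv
    rw [Ψ.map_coord_zero i hi, abs_zero]
    positivity
  simp only [not_exists] at hv
  have hunit : ∀ i, ‖‖v i‖⁻¹ • v i‖ = 1 := fun i => by
    rw [norm_smul, norm_inv, norm_norm, inv_mul_cancel₀ (norm_ne_zero_iff.2 (hv i))]
  calc |Ψ v| = |Ψ fun i => ‖v i‖ • ‖v i‖⁻¹ • v i| := by
        simp only [smul_inv_smul₀ (norm_ne_zero_iff.2 (hv _))]
    _ = (∏ i, ‖v i‖) * |Ψ fun i => ‖v i‖⁻¹ • v i| := by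
        rw [Ψ.map_smul_univ, smul_eq_mul, abs_mul, abs_of_nonneg (by positivity)]
    _ ≤ c * ∏ i, ‖v i‖ := by
        rw [mul_comm c]; exact mul_le_mul_of_nonneg_left (h _ hunit) (by positivity)

theorem sum_norm_sq_add_single {κ : Type*} [Fintype κ] [DecidableEq κ] {F : κ → Type*}
    [∀ k, SeminormedAddCommGroup (F k)] (G : ∀ k, F k) (k₀ : κ) (δ : F k₀) :
    ∑ k, ‖(G + Pi.single k₀ δ) k‖ ^ 2 = ∑ k, ‖G k‖ ^ 2 + (‖G k₀ + δ‖ ^ 2 - ‖G k₀‖ ^ 2) := by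
  rw [← Finset.add_sum_erase _ _ (Finset.mem_univ k₀),
    ← Finset.add_sum_erase _ (fun k => ‖G k‖ ^ 2) (Finset.mem_univ k₀),
    Finset.sum_congr rfl fun k hk => by
      rw [Pi.add_apply, Pi.single_eq_of_ne (Finset.ne_of_mem_erase hk), add_zero],
    Pi.add_apply, Pi.single_eq_same]
  ring

section InnerProductSpace

variable {E : Type*} [NormedAddCommGroup E] [InnerProductSpace ℝ E]

theorem ContinuousLinearMap.eq_mul_inner_of_norming [CompleteSpace E] (f : E →L[ℝ] ℝ) {y : E}
    (hy : ‖y‖ = 1) (hf : ∀ b, |f b| ≤ |f y| * ‖b‖) (b : E) : f b = f y * ⟪y, b⟫ := by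
  set r := (InnerProductSpace.toDual ℝ E).symm f
  have hr : ∀ b, ⟪r, b⟫ = f b := fun b => InnerProductSpace.toDual_symm_apply
  have hr_le : ‖r‖ ≤ |f y| := by
    have h := hf r
    rw [← hr r, real_inner_self_eq_norm_sq, abs_of_nonneg (sq_nonneg _)] at h
    rcases (norm_nonneg r).eq_or_lt with h0 | h0
    · rw [← h0]; exact abs_nonneg _
    · nlinarith
  have hr_eq : r = f y • y := by
    rw [← sub_eq_zero, ← norm_le_zero_iff, ← sq_le_sq₀ (norm_nonneg _) le_rfl, norm_sub_sq_real,
      inner_smul_right, hr, norm_smul, mul_pow, hy, Real.norm_eq_abs, sq_abs]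
    nlinarith [pow_le_pow_left₀ (norm_nonneg r) hr_le 2, sq_abs (f y)]
  rw [← hr, hr_eq, inner_smul_left]
  simp

theorem LinearMap.apply_add_self_of_eq_mul_inner (B : E →ₗ[ℝ] E →ₗ[ℝ] ℝ) {x y : E} {θ : ℝ}
    (hx : ∀ b, B x b = θ * ⟪y, b⟫) (hy : ∀ b, B y b = θ * ⟪x, b⟫) :
    B (x + y) (x + y) = θ * ‖x + y‖ ^ 2 := by
  simp only [map_add, LinearMap.add_apply, hx, hy, norm_add_sq_real, real_inner_self_eq_norm_sq,
    real_inner_comm x y]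
  ring

theorem norm_add_smul_sq (U v : E) (t : ℝ) :
    ‖U + t • v‖ ^ 2 = ‖U‖ ^ 2 + 2 * t * ⟪U, v⟫ + t ^ 2 * ‖v‖ ^ 2 := by
  rw [norm_add_sq_real, inner_smul_right, norm_smul, mul_pow, Real.norm_eq_abs, sq_abs]
  ring

theorem exists_smul_norm_add_lt {x y : E} (hx : ‖x‖ = 1) (hy : ‖y‖ = 1) (hxy : x ≠ y)
    (hxy' : x ≠ -y) (U : E) :
    ∃ (s : ℝ) (v : E), (v = x + y ∨ v = x - y) ∧ ‖s • v‖ = 1 ∧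
      ‖U + (x + y)‖ < ‖U + (2 * s) • v‖ := by
  have hinner : ⟪x, y⟫ < 1 :=
    (real_inner_le_norm x y).trans_eq (by rw [hx, hy, one_mul]) |>.lt_of_ne
      fun h => hxy ((inner_eq_one_iff_of_norm_eq_one hx hy).1 h)
  have hsum_sq : ‖x + y‖ ^ 2 < 4 := by rw [norm_add_sq_real, hx, hy]; linarith
  by_cases hU : 0 ≤ ⟪U, x + y⟫
  · -- stretching `x + y` to length `2 > ‖x + y‖` moves `U + (x + y)` outwards
    have hpos : 0 < ‖x + y‖ := norm_pos_iff.2 fun h => hxy' (eq_neg_of_add_eq_zero_left h)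
    have hunit : ‖x + y‖⁻¹ * ‖x + y‖ = 1 := inv_mul_cancel₀ hpos.ne'
    refine ⟨‖x + y‖⁻¹, x + y, Or.inl rfl, by rw [norm_smul, norm_inv, norm_norm, hunit], ?_⟩
    have hstretch : 1 < 2 * ‖x + y‖⁻¹ := by
      rw [← hunit]; nlinarith [inv_pos.2 hpos]
    have hlen : (2 * ‖x + y‖⁻¹) ^ 2 * ‖x + y‖ ^ 2 = 4 := by
      rw [← mul_pow, mul_assoc, hunit]; norm_num
    have h1 := norm_add_smul_sq U (x + y) 1
    rw [one_smul] at h1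
    rw [← sq_lt_sq₀ (norm_nonneg _) (norm_nonneg _), h1, norm_add_smul_sq, hlen]
    nlinarith
  · -- `U + 2 a` with `a = ±(x - y)/‖x - y‖`, `⟪U, a⟫ ≥ 0`, has norm² `≥ ‖U‖² + 4`, while
    -- `‖U + (x + y)‖² < ‖U‖² + 4` because `⟪U, x + y⟫ < 0`
    have hpos : 0 < ‖x - y‖ := norm_pos_iff.2 (sub_ne_zero.2 hxy)
    obtain ⟨s, hs, hsU⟩ : ∃ s : ℝ, |s| = ‖x - y‖⁻¹ ∧ 0 ≤ s * ⟪U, x - y⟫ := by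
      rcases le_total 0 ⟪U, x - y⟫ with h | h
      · exact ⟨‖x - y‖⁻¹, abs_of_pos (inv_pos.2 hpos), by positivity⟩
      · exact ⟨-‖x - y‖⁻¹, by rw [abs_neg, abs_of_pos (inv_pos.2 hpos)],
          by nlinarith [inv_pos.2 hpos]⟩
    have hunit : s ^ 2 * ‖x - y‖ ^ 2 = 1 := by
      rw [← sq_abs, hs, ← mul_pow, inv_mul_cancel₀ hpos.ne', one_pow]
    refine ⟨s, x - y, Or.inr rfl,
      by rw [norm_smul, Real.norm_eq_abs, hs, inv_mul_cancel₀ hpos.ne'], ?_⟩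
    rw [← sq_lt_sq₀ (norm_nonneg _) (norm_nonneg _), norm_add_sq_real, norm_add_smul_sq, mul_pow,
      mul_assoc (2 ^ 2), hunit]
    nlinarith

end InnerProductSpace

section NearestPoint

variable {E : Type*} [NormedAddCommGroup E] [InnerProductSpace ℝ E]

theorem inner_eq_norm_sq_of_dist_eq_infDist {C : Set E} (hC : ∀ t : ℝ, ∀ S ∈ C, t • S ∈ C)
    {T S : E} (hS : S ∈ C) (hTS : dist T S = Metric.infDist T C) : ⟪T, S⟫ = ‖S‖ ^ 2 := by
  rcases eq_or_ne S 0 with rfl | hS0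
  · simp
  have hpos : 0 < ‖S‖ ^ 2 := by positivity
  have hle : ‖T - S‖ ^ 2 ≤ ‖T - (⟪T, S⟫ / ‖S‖ ^ 2) • S‖ ^ 2 := by
    rw [← dist_eq_norm, ← dist_eq_norm, hTS]
    exact pow_le_pow_left₀ Metric.infDist_nonneg (Metric.infDist_le_dist_of_mem (hC _ S hS)) 2
  rw [norm_sub_sq_real, norm_sub_sq_real, inner_smul_right, norm_smul, mul_pow, Real.norm_eq_abs,
    sq_abs] at hle
  field_simp at hle
  nlinarith [sq_nonneg (⟪T, S⟫ - ‖S‖ ^ 2)]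

theorem fderiv_infDist_sq {K : Submodule ℝ E} {C : Set E} {T : K}
    (hT : DifferentiableAt ℝ (fun u : K => Metric.infDist (u : E) C) T) {S : E} (hS : S ∈ C)
    (hTS : dist (T : E) S = Metric.infDist (T : E) C) :
    fderiv ℝ (fun u : K => Metric.infDist (u : E) C ^ 2) T =
      2 • (innerSL ℝ ((T : E) - S)).comp K.subtypeL := by
  have hsq := (K.subtypeL.hasFDerivAt (x := T)).sub_const S |>.norm_sq
  have hmin : IsLocalMin (fun u : K => ‖(u : E) - S‖ ^ 2 - Metric.infDist (u : E) C ^ 2) T :=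
    Filter.Eventually.of_forall fun u => by
      dsimp only
      rw [← dist_eq_norm, ← dist_eq_norm, hTS, sub_self, sub_nonneg]
      exact pow_le_pow_left₀ Metric.infDist_nonneg (Metric.infDist_le_dist_of_mem hS) 2
  exact (sub_eq_zero.1 (hmin.hasFDerivAt_eq_zero (hsq.sub (hT.pow 2).hasFDerivAt))).symm

theorem eq_of_dist_eq_infDist_of_differentiableAt {K : Submodule ℝ E} {C : Set E}
    (hC : ∀ t : ℝ, ∀ S ∈ C, t • S ∈ C) {T : K}
    (hT : DifferentiableAt ℝ (fun u : K => Metric.infDist (u : E) C) T) {S S' : E}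
    (hS : S ∈ C) (hSK : S ∈ K) (hTS : dist (T : E) S = Metric.infDist (T : E) C)
    (hS' : S' ∈ C) (hTS' : dist (T : E) S' = Metric.infDist (T : E) C) : S' = S := by
  have hSS' : ⟪S', S⟫ = ‖S‖ ^ 2 := by
    have h := congrArg (fun L => L ⟨S, hSK⟩)
      ((fderiv_infDist_sq hT hS hTS).symm.trans (fderiv_infDist_sq hT hS' hTS'))
    simp only [smul_apply, ContinuousLinearMap.comp_apply, Submodule.subtypeL_apply,
      innerSL_apply_apply, nsmul_eq_mul, Nat.cast_ofNat, inner_sub_left,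
      real_inner_self_eq_norm_sq] at h
    linarith
  have hnorm : ‖S'‖ ^ 2 = ‖S‖ ^ 2 := by
    have h := congrArg (· ^ 2) (hTS.trans hTS'.symm)
    simp only [dist_eq_norm, norm_sub_sq_real, inner_eq_norm_sq_of_dist_eq_infDist hC hS hTS,
      inner_eq_norm_sq_of_dist_eq_infDist hC hS' hTS'] at h
    linarith
  rw [← sub_eq_zero, ← norm_eq_zero, ← sq_eq_zero_iff, norm_sub_sq_real, hnorm, hSS']
  ring

end NearestPoint

namespace RankOneApprox

variable {d p : ℕ} {g : Fin d → Fin p} {n : Fin p → ℕ}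

abbrev FactorSpace (n : Fin p → ℕ) (k : Fin p) := EuclideanSpace ℝ (Fin (n k))

def tensorMap : MultilinearMap ℝ (fun i => FactorSpace n (g i)) (TensorSpace d p g n) :=
  (WithLp.linearEquiv 2 ℝ _).symm.toLinearMap.compMultilinearMap <|
    MultilinearMap.pi fun idx => (MultilinearMap.mkPiAlgebra ℝ (Fin d) ℝ).compLinearMap
      fun i => (EuclideanSpace.proj (idx i) : FactorSpace n (g i) →L[ℝ] ℝ).toLinearMap

@[simp]
theorem tensorMap_apply (v : ∀ i, FactorSpace n (g i)) (idx : ∀ i, Fin (n (g i))) :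
    tensorMap v idx = ∏ i, v i (idx i) := by
  simp [tensorMap]

theorem norm_tensorMap (v : ∀ i, FactorSpace n (g i)) : ‖tensorMap v‖ = ∏ i, ‖v i‖ := by
  rw [EuclideanSpace.norm_eq, Finset.prod_congr rfl fun i _ => EuclideanSpace.norm_eq (v i),
    ← Real.sqrt_prod _ (fun i _ => by positivity)]
  simp only [tensorMap_apply, Real.norm_eq_abs, sq_abs, Finset.prod_pow, Finset.prod_univ_sum,
    Fintype.piFinset_univ]

theorem continuous_tensorMap :
    Continuous (tensorMap : (∀ i, FactorSpace n (g i)) → TensorSpace d p g n) := by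
  have h : (tensorMap : (∀ i, FactorSpace n (g i)) → TensorSpace d p g n) =
      fun v => WithLp.toLp 2 fun idx => ∏ i, v i (idx i) := by
    ext v idx; simp
  rw [h]
  fun_prop

def transport {k k' : Fin p} (h : k = k') : FactorSpace n k ≃ₗᵢ[ℝ] FactorSpace n k' :=
  LinearIsometryEquiv.piLpCongrLeft 2 ℝ ℝ (finCongr (congrArg n h))

@[simp]
theorem transport_apply {k k' : Fin p} (h : k = k') (v : FactorSpace n k) (β : Fin (n k')) :
    transport h v β = v (Fin.cast (congrArg n h).symm β) := rfl

@[simp]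
theorem transport_rfl {k : Fin p} (v : FactorSpace n k) : transport rfl v = v := by
  ext β; simp

theorem transport_transport {k k' k'' : Fin p} (h : k = k') (h' : k' = k'')
    (v : FactorSpace n k) :
    transport h' (transport h v) = transport (h.trans h') v := by
  ext β; simp

theorem single_transport {k k' : Fin p} (h : k = k') (v : FactorSpace n k) :
    Pi.single k' (transport h v) = Pi.single (M := FactorSpace n) k v := by
  subst h; rw [transport_rfl]

def pairUpdate (w : ∀ i, FactorSpace n (g i)) (i j : Fin d) (hg : g i = g j)
    (a b : FactorSpace n (g i)) : ∀ i, FactorSpace n (g i) :=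
  Function.update (Function.update w i a) j (transport hg b)

theorem pairUpdate_self (w : ∀ i, FactorSpace n (g i)) {i j : Fin d} (hg : g i = g j) :
    pairUpdate w i j hg (w i) (transport hg.symm (w j)) = w := by
  simp [pairUpdate, transport_transport]

theorem pairUpdate_apply_of_ne (w : ∀ i, FactorSpace n (g i)) {i j l : Fin d} (hli : l ≠ i)
    (hlj : l ≠ j) (hg : g i = g j) (a b : FactorSpace n (g i)) :
    pairUpdate w i j hg a b l = w l := by
  simp [pairUpdate, hli, hlj]

theorem prod_norm_pairUpdate (w : ∀ i, FactorSpace n (g i)) (hw : ∀ i, ‖w i‖ = 1) {i j : Fin d}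
    (hij : i ≠ j) (hg : g i = g j) (a b : FactorSpace n (g i)) :
    ∏ l, ‖pairUpdate w i j hg a b l‖ = ‖a‖ * ‖b‖ := by
  rw [← Finset.mul_prod_erase _ _ (Finset.mem_univ i),
    ← Finset.mul_prod_erase _ _ (Finset.mem_erase.2 ⟨hij.symm, Finset.mem_univ j⟩),
    Finset.prod_eq_one fun l hl => ?_]
  · rw [pairUpdate, Function.update_self, Function.update_of_ne hij, Function.update_self,
      LinearIsometryEquiv.norm_map, mul_one]
  · obtain ⟨hlj, hli⟩ : l ≠ j ∧ l ≠ i := by simpa using hl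
    rw [pairUpdate_apply_of_ne w hli hlj, hw]

def pairForm (Ψ : MultilinearMap ℝ (fun i => FactorSpace n (g i)) ℝ)
    (w : ∀ i, FactorSpace n (g i)) {i j : Fin d} (hij : i ≠ j) (hg : g i = g j) :
    FactorSpace n (g i) →ₗ[ℝ] FactorSpace n (g i) →ₗ[ℝ] ℝ :=
  LinearMap.mk₂ ℝ (fun a b => Ψ (pairUpdate w i j hg a b))
    (fun a₁ a₂ b => by simp only [pairUpdate, Function.update_comm hij, Ψ.map_update_add])
    (fun c a b => by simp only [pairUpdate, Function.update_comm hij, Ψ.map_update_smul])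
    (fun a b₁ b₂ => by simp only [pairUpdate, map_add, Ψ.map_update_add])
    (fun c a b => by simp only [pairUpdate, map_smul, Ψ.map_update_smul])

@[simp]
theorem pairForm_apply (Ψ : MultilinearMap ℝ (fun i => FactorSpace n (g i)) ℝ)
    (w : ∀ i, FactorSpace n (g i)) {i j : Fin d} (hij : i ≠ j) (hg : g i = g j)
    (a b : FactorSpace n (g i)) : pairForm Ψ w hij hg a b = Ψ (pairUpdate w i j hg a b) := rfl

def IsPartiallySymmetric (Ψ : MultilinearMap ℝ (fun i => FactorSpace n (g i)) ℝ) : Prop :=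
  ∀ (w : ∀ i, FactorSpace n (g i)) (i j : Fin d), i ≠ j → ∀ (hg : g i = g j) (a b),
    Ψ (pairUpdate w i j hg a b) = Ψ (pairUpdate w i j hg b a)

def groupSum : (∀ i, FactorSpace n (g i)) →ₗ[ℝ] ∀ k, FactorSpace n k :=
  ∑ i, (LinearMap.single ℝ (FactorSpace n) (g i)).comp (LinearMap.proj i)

theorem groupSum_single (i : Fin d) (u : FactorSpace n (g i)) :
    groupSum (Pi.single i u) = Pi.single (g i) u := by
  simp only [groupSum, LinearMap.coe_sum, LinearMap.coe_comp, LinearMap.coe_single,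
    LinearMap.coe_proj, Finset.sum_apply, Function.comp_apply, Function.eval]
  rw [Finset.sum_eq_single i (fun l _ hl => by rw [Pi.single_eq_of_ne hl, Pi.single_zero])
    (by simp), Pi.single_eq_same]

theorem groupSum_update (w : ∀ i, FactorSpace n (g i)) (i : Fin d) (u : FactorSpace n (g i)) :
    groupSum (Function.update w i u) = groupSum w + Pi.single (g i) (u - w i) := by
  rw [Pi.update_eq_sub_add_single, map_add, map_sub, groupSum_single, groupSum_single,
    Pi.single_sub]
  abel

theorem groupSum_pairUpdate (w : ∀ i, FactorSpace n (g i)) {i j : Fin d} (hij : i ≠ j)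
    (hg : g i = g j) (a : FactorSpace n (g i)) :
    groupSum (pairUpdate w i j hg a a) =
      groupSum w + Pi.single (g i) ((2 : ℝ) • a - (w i + transport hg.symm (w j))) := by
  rw [pairUpdate, groupSum_update, groupSum_update, Function.update_of_ne hij.symm,
    ← single_transport hg.symm (transport hg a - w j), map_sub, transport_transport]
  rw [transport_rfl, add_assoc, ← Pi.single_add, two_smul]
  abel_nf

def potential (w : ∀ i, FactorSpace n (g i)) : ℝ := ∑ k, ‖groupSum w k‖ ^ 2

theorem continuous_potential : Continuous (potential : (∀ i, FactorSpace n (g i)) → ℝ) := by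
  have := (groupSum (g := g) (n := n)).continuous_of_finiteDimensional
  unfold potential
  fun_prop

theorem potential_pairUpdate (w : ∀ i, FactorSpace n (g i)) {i j : Fin d} (hij : i ≠ j)
    (hg : g i = g j) (a : FactorSpace n (g i)) :
    potential (pairUpdate w i j hg a a) - potential w =
      ‖groupSum w (g i) - (w i + transport hg.symm (w j)) + (2 : ℝ) • a‖ ^ 2 -
        ‖groupSum w (g i) - (w i + transport hg.symm (w j)) +
          (w i + transport hg.symm (w j))‖ ^ 2 := by
  rw [potential, groupSum_pairUpdate w hij, sum_norm_sq_add_single, potential, sub_add_cancel,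
    add_sub_cancel_left, sub_add_comm, add_comm (2 • a - _)]

theorem norm_pairUpdate (w : ∀ i, FactorSpace n (g i)) (hw : ∀ i, ‖w i‖ = 1) {i j : Fin d}
    (hg : g i = g j) {a b : FactorSpace n (g i)} (ha : ‖a‖ = 1) (hb : ‖b‖ = 1) (l : Fin d) :
    ‖pairUpdate w i j hg a b l‖ = 1 := by
  unfold pairUpdate
  rcases eq_or_ne l j with rfl | hlj
  · rw [Function.update_self, LinearIsometryEquiv.norm_map, hb]
  rcases eq_or_ne l i with rfl | hli
  · rw [Function.update_of_ne hlj, Function.update_self, ha]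
  rw [Function.update_of_ne hlj, Function.update_of_ne hli, hw]

theorem eq_transport_or_eq_neg_of_isMax {Ψ : MultilinearMap ℝ (fun i => FactorSpace n (g i)) ℝ}
    (hΨ : IsPartiallySymmetric Ψ) {w : ∀ i, FactorSpace n (g i)} (hw : ∀ i, ‖w i‖ = 1)
    (hmax : ∀ v, |Ψ v| ≤ |Ψ w| * ∏ i, ‖v i‖)
    (hpot : ∀ v, (∀ i, ‖v i‖ = 1) → |Ψ v| = |Ψ w| → potential v ≤ potential w)
    (i j : Fin d) (hg : g i = g j) :
    w i = transport hg.symm (w j) ∨ w i = -transport hg.symm (w j) := by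
  rcases eq_or_ne i j with rfl | hij
  · exact Or.inl (transport_rfl _).symm
  set x := w i
  set y := transport hg.symm (w j)
  have hx : ‖x‖ = 1 := hw i
  have hy : ‖y‖ = 1 := by rw [LinearIsometryEquiv.norm_map, hw]
  by_contra hxy
  rw [not_or] at hxy
  set B := pairForm Ψ w hij hg
  have hBxy : B x y = Ψ w := by rw [pairForm_apply, pairUpdate_self]
  have hB : ∀ a b, |B a b| ≤ |Ψ w| * (‖a‖ * ‖b‖) := fun a b =>
    (hmax _).trans_eq (by rw [prod_norm_pairUpdate w hw hij hg])
  have hBx : ∀ b, B x b = Ψ w * ⟪y, b⟫ := fun b => by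
    have := (LinearMap.toContinuousLinearMap (B x)).eq_mul_inner_of_norming hy
      (fun b => by simpa [hBxy, hx] using hB x b) b
    simpa [hBxy] using this
  have hBy : ∀ b, B y b = Ψ w * ⟪x, b⟫ := fun b => by
    have hByx : B y x = Ψ w := (hΨ w i j hij hg y x).trans hBxy
    have := (LinearMap.toContinuousLinearMap (B y)).eq_mul_inner_of_norming hx
      (fun b => by simpa [hByx, hy] using hB y b) b
    simpa [hByx] using this
  obtain ⟨s, v, hv, hsv, hlt⟩ :=
    exists_smul_norm_add_lt hx hy hxy.1 hxy.2 (groupSum w (g i) - (x + y))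
  have hBv : |B (s • v) (s • v)| = |Ψ w| := by
    have hvv : |B v v| = |Ψ w| * ‖v‖ ^ 2 := by
      rcases hv with rfl | rfl
      · rw [B.apply_add_self_of_eq_mul_inner hBx hBy, abs_mul, abs_pow, abs_norm]
      · rw [sub_eq_add_neg, B.apply_add_self_of_eq_mul_inner (y := -y) (θ := -Ψ w)
          (by simpa using hBx) (by simpa using hBy), abs_mul, abs_neg, abs_pow, abs_norm]
    have hsv' : |s| * ‖v‖ = 1 := by rw [← hsv, norm_smul, Real.norm_eq_abs]
    simp only [map_smul, LinearMap.smul_apply, smul_eq_mul]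
    rw [abs_mul, abs_mul, hvv]
    linear_combination (|Ψ w| * (|s| * ‖v‖ + 1)) * hsv'
  -- `s • v` in both slots keeps `|Ψ|` maximal, yet raises the potential
  have hle := sub_nonpos.2 (hpot _ (norm_pairUpdate w hw hg hsv hsv) hBv)
  rw [potential_pairUpdate w hij, ← mul_smul] at hle
  rw [← sq_lt_sq₀ (norm_nonneg _) (norm_nonneg _)] at hlt
  linarith

theorem exists_norming_tuple_of_isPartiallySymmetric (hn : ∀ i, 0 < n (g i))
    {Ψ : MultilinearMap ℝ (fun i => FactorSpace n (g i)) ℝ} (hΨc : Continuous Ψ)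
    (hΨ : IsPartiallySymmetric Ψ) :
    ∃ w : ∀ i, FactorSpace n (g i), (∀ i, ‖w i‖ = 1) ∧ (∀ v, |Ψ v| ≤ |Ψ w| * ∏ i, ‖v i‖) ∧
      ∀ i j (hg : g i = g j), w i = transport hg.symm (w j) ∨ w i = -transport hg.symm (w j) := by
  set K := Set.univ.pi fun i => Metric.sphere (0 : FactorSpace n (g i)) 1
  have hK : ∀ v, v ∈ K ↔ ∀ i, ‖v i‖ = 1 := by simp [K]
  obtain ⟨w, hwK, hmax, hpot⟩ :=
    (isCompact_univ_pi fun i => isCompact_sphere 0 1).exists_isMaxOn_lex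
      ⟨fun i => EuclideanSpace.single ⟨0, hn i⟩ 1, (hK _).2 fun i => by simp⟩
      (continuous_abs.comp hΨc) continuous_potential
  have hw := (hK w).1 hwK
  have hbound := Ψ.abs_le_mul_prod_norm (abs_nonneg (Ψ w)) fun u hu => hmax ((hK u).2 hu)
  exact ⟨w, hw, hbound,
    eq_transport_or_eq_neg_of_isMax hΨ hw hbound fun v hv => hpot v ((hK v).2 hv)⟩

theorem tensorMap_pairUpdate_apply (w : ∀ i, FactorSpace n (g i)) {i j : Fin d} (hij : i ≠ j)
    (hg : g i = g j) (a b : FactorSpace n (g i)) (idx : ∀ i, Fin (n (g i))) :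
    tensorMap (pairUpdate w i j hg a b) idx =
      a (idx i) * transport hg b (idx j) * ∏ l ∈ (Finset.univ.erase i).erase j, w l (idx l) := by
  have hrest : ∏ l ∈ (Finset.univ.erase i).erase j, pairUpdate w i j hg a b l (idx l) =
      ∏ l ∈ (Finset.univ.erase i).erase j, w l (idx l) :=
    Finset.prod_congr rfl fun l hl => by
      obtain ⟨hlj, hli⟩ : l ≠ j ∧ l ≠ i := by simpa using hl
      rw [pairUpdate_apply_of_ne w hli hlj]
  rw [tensorMap_apply, ← Finset.mul_prod_erase _ _ (Finset.mem_univ i),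
    ← Finset.mul_prod_erase _ _ (Finset.mem_erase.2 ⟨hij.symm, Finset.mem_univ j⟩), hrest,
    ← mul_assoc, pairUpdate, Function.update_self, Function.update_of_ne hij,
    Function.update_self]

theorem apply_swap_eq {i j : Fin d} (hg : g i = g j) (l : Fin d) : g (Equiv.swap i j l) = g l := by
  rcases eq_or_ne l i with rfl | hli
  · simp [hg]
  rcases eq_or_ne l j with rfl | hlj
  · simp [hg]
  rw [Equiv.swap_apply_of_ne_of_ne hli hlj]

def swapIndex {i j : Fin d} (hg : g i = g j) (idx : ∀ l, Fin (n (g l))) : ∀ l, Fin (n (g l)) :=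
  fun l => Fin.cast (congrArg n (apply_swap_eq hg l)) (idx (Equiv.swap i j l))

theorem val_swapIndex {i j : Fin d} (hg : g i = g j) (idx : ∀ l, Fin (n (g l))) {l l' : Fin d}
    (h : Equiv.swap i j l = l') : (swapIndex hg idx l : ℕ) = idx l' := by
  subst h; rfl

theorem swapIndex_involutive {i j : Fin d} (hg : g i = g j) :
    Function.Involutive (swapIndex (n := n) hg) := fun idx =>
  funext fun l => Fin.ext <| (val_swapIndex hg _ rfl).trans (val_swapIndex hg idx (by simp))

theorem tensorMap_pairUpdate_swapIndex (w : ∀ i, FactorSpace n (g i)) {i j : Fin d} (hij : i ≠ j)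
    (hg : g i = g j) (a b : FactorSpace n (g i)) (idx : ∀ i, Fin (n (g i))) :
    tensorMap (pairUpdate w i j hg a b) (swapIndex hg idx) =
      tensorMap (pairUpdate w i j hg b a) idx := by
  have hi : swapIndex hg idx i = Fin.cast (congrArg n hg).symm (idx j) :=
    Fin.ext (val_swapIndex hg idx (Equiv.swap_apply_left i j))
  have hj : Fin.cast (congrArg n hg).symm (swapIndex hg idx j) = idx i :=
    Fin.ext (val_swapIndex hg idx (Equiv.swap_apply_right i j))
  have hrest : ∏ l ∈ (Finset.univ.erase i).erase j, w l (swapIndex hg idx l) =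
      ∏ l ∈ (Finset.univ.erase i).erase j, w l (idx l) :=
    Finset.prod_congr rfl fun l hl => congrArg (w l) <| Fin.ext <| by
      obtain ⟨hlj, hli⟩ : l ≠ j ∧ l ≠ i := by simpa using hl
      exact val_swapIndex hg idx (Equiv.swap_apply_of_ne_of_ne hli hlj)
  rw [tensorMap_pairUpdate_apply w hij, tensorMap_pairUpdate_apply w hij, transport_apply,
    transport_apply, hi, hj, hrest, mul_comm (a _)]

def contraction (T : TensorSpace d p g n) : MultilinearMap ℝ (fun i => FactorSpace n (g i)) ℝ :=
  (innerₛₗ ℝ T).compMultilinearMap tensorMap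

@[simp]
theorem contraction_apply (T : TensorSpace d p g n) (v : ∀ i, FactorSpace n (g i)) :
    contraction T v = ⟪T, tensorMap v⟫ := rfl

theorem isPartiallySymmetric_contraction {T : TensorSpace d p g n}
    (hT : T ∈ Somega d p g n) :
    IsPartiallySymmetric (contraction T) := by
  intro w i j hij hg a b
  simp only [contraction_apply, PiLp.inner_apply]
  refine Fintype.sum_equiv (swapIndex_involutive hg).toPerm _ _ fun idx => ?_
  rw [Function.Involutive.coe_toPerm, tensorMap_pairUpdate_swapIndex w hij hg b a idx,
    show T (swapIndex hg idx) = T idx from hT _ (apply_swap_eq hg) idx]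

theorem continuous_contraction (T : TensorSpace d p g n) : Continuous (contraction T) :=
  continuous_const.inner continuous_tensorMap

theorem mem_rankOneSet_iff {S : TensorSpace d p g n} :
    S ∈ rankOneSet d p g n ↔ ∃ v, tensorMap v = S := by
  constructor
  · rintro ⟨w, hw⟩
    exact ⟨fun i => WithLp.toLp 2 (w i), by ext idx; simp [hw]⟩
  · rintro ⟨v, rfl⟩
    exact ⟨fun i => v i, fun idx => by simp⟩

theorem smul_mem_rankOneSet (hd : 1 ≤ d) (c : ℝ) {S : TensorSpace d p g n}
    (hS : S ∈ rankOneSet d p g n) : c • S ∈ rankOneSet d p g n := by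
  obtain ⟨v, rfl⟩ := mem_rankOneSet_iff.1 hS
  exact mem_rankOneSet_iff.2 ⟨Function.update v ⟨0, hd⟩ (c • v ⟨0, hd⟩), by
    rw [tensorMap.map_update_smul, Function.update_eq_self]⟩

-- `|ρ|` is spread evenly over the `d` factors.
theorem smul_tensorMap_mem_omegaSymRankOne (hd : 1 ≤ d) (ρ : ℝ) (z : ∀ k, FactorSpace n k) :
    ρ • tensorMap (fun i => z (g i)) ∈ omegaSymRankOne d p g n := by
  refine ⟨if 0 ≤ ρ then 1 else -1, by split_ifs <;> simp,
    fun k β => |ρ| ^ (d : ℝ)⁻¹ * z k β, fun idx => ?_⟩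
  rw [PiLp.smul_apply, tensorMap_apply, smul_eq_mul, Finset.prod_mul_distrib, Finset.prod_const,
    Finset.card_univ, Fintype.card_fin, Real.rpow_inv_natCast_pow (abs_nonneg ρ) (by omega)]
  split_ifs with hρ
  · rw [abs_of_nonneg hρ, one_mul]
  · rw [abs_of_neg (not_le.1 hρ)]; ring

theorem exists_eq_smul_of_eq_transport_or_eq_neg {w : ∀ i, FactorSpace n (g i)}
    (hw : ∀ i j (hg : g i = g j), w i = transport hg.symm (w j) ∨ w i = -transport hg.symm (w j)) :
    ∃ (c : Fin d → ℝ) (z : ∀ k, FactorSpace n k), ∀ i, w i = c i • z (g i) := by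
  classical
  let z : ∀ k, FactorSpace n k := fun k =>
    if h : ∃ i, g i = k then transport h.choose_spec (w h.choose) else 0
  refine ⟨fun i => if w i = z (g i) then 1 else -1, z, fun i => ?_⟩
  have hex : ∃ i', g i' = g i := ⟨i, rfl⟩
  have hz : z (g i) = transport hex.choose_spec (w hex.choose) := dif_pos hex
  show w i = (if w i = z (g i) then 1 else -1) • z (g i)
  split_ifs with h
  · rw [h, one_smul]
  · rcases hw i _ hex.choose_spec.symm with h' | h'
    · exact absurd (h'.trans hz.symm) h
    · rw [h', hz, neg_one_smul]

theorem norm_sub_smul_tensorMap_le {T : TensorSpace d p g n} {w : ∀ i, FactorSpace n (g i)}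
    (hw : ∀ i, ‖w i‖ = 1) (hmax : ∀ v, |contraction T v| ≤ |contraction T w| * ∏ i, ‖v i‖)
    (v : ∀ i, FactorSpace n (g i)) :
    ‖T - contraction T w • tensorMap w‖ ≤ ‖T - tensorMap v‖ := by
  have hw' : ‖tensorMap w‖ = 1 := by rw [norm_tensorMap]; exact Finset.prod_eq_one fun i _ => hw i
  have hv := (le_abs_self _).trans (hmax v)
  rw [← sq_le_sq₀ (norm_nonneg _) (norm_nonneg _), norm_sub_sq_real, norm_sub_sq_real,
    inner_smul_right, norm_smul, hw', norm_tensorMap, Real.norm_eq_abs, ← contraction_apply,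
    ← contraction_apply]
  nlinarith [sq_nonneg (∏ i, ‖v i‖ - |contraction T w|), sq_abs (contraction T w)]

theorem exists_best_rankOne_approx_mem_omegaSymRankOne (hd : 1 ≤ d) (hn : ∀ i, 0 < n (g i))
    {T : TensorSpace d p g n} (hT : T ∈ Somega d p g n) :
    ∃ S ∈ rankOneSet d p g n, dist T S = Metric.infDist T (rankOneSet d p g n) ∧
      S ∈ omegaSymRankOne d p g n := by
  obtain ⟨w, hw, hmax, hsign⟩ :=
    exists_norming_tuple_of_isPartiallySymmetric hn (continuous_contraction T)
      (isPartiallySymmetric_contraction hT)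
  obtain ⟨c, z, hcz⟩ := exists_eq_smul_of_eq_transport_or_eq_neg hsign
  have hS := smul_mem_rankOneSet hd (contraction T w) (mem_rankOneSet_iff.2 ⟨w, rfl⟩)
  refine ⟨_, hS, le_antisymm (Metric.infDist_le_dist_of_mem hS) ?_ |>.symm, ?_⟩
  · refine (Metric.le_infDist ⟨_, hS⟩).2 fun S' hS' => ?_
    obtain ⟨v, rfl⟩ := mem_rankOneSet_iff.1 hS'
    rw [dist_eq_norm, dist_eq_norm]
    exact norm_sub_smul_tensorMap_le hw hmax v
  · rw [funext hcz, tensorMap.map_smul_univ, smul_smul]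
    exact smul_tensorMap_mem_omegaSymRankOne hd _ z

theorem apply_finCast_eq {k k' : Fin p} (z : ∀ k, Fin (n k) → ℝ) (h : k' = k) (β : Fin (n k')) :
    z k (Fin.cast (congrArg n h) β) = z k' β := by
  subst h; rfl

theorem mem_Somega_of_mem_omegaSymRankOne {S : TensorSpace d p g n}
    (hS : S ∈ omegaSymRankOne d p g n) : S ∈ Somega d p g n := by
  obtain ⟨ε, -, z, hz⟩ := hS
  intro σ hσ idx
  rw [hz, hz, ← Equiv.prod_comp σ fun i => z (g i) (idx i)]
  exact congrArg (ε * ·) (Finset.prod_congr rfl fun i _ => apply_finCast_eq z (hσ i) _)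

end RankOneApprox

end

open RankOneApprox

theorem best_rank_one_approx_omega_symmetric_general
    (d p : ℕ) (hd : 1 ≤ d) (g : Fin d → Fin p)
    (n : Fin p → ℕ) (hn : ∀ k, 1 ≤ n k)
    (μ : Measure (Somega d p g n)) [μ.IsAddHaarMeasure] :
    (∀ T ∈ Somega d p g n, ∃ S ∈ rankOneSet d p g n,
        dist T S = Metric.infDist T (rankOneSet d p g n) ∧
        S ∈ omegaSymRankOne d p g n) ∧
      ∀ᵐ (T : Somega d p g n) ∂μ, ∃ S,
        (S ∈ rankOneSet d p g n ∧
          dist (T : TensorSpace d p g n) S =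
            Metric.infDist (T : TensorSpace d p g n) (rankOneSet d p g n)) ∧
        S ∈ omegaSymRankOne d p g n ∧
        ∀ S', S' ∈ rankOneSet d p g n →
          dist (T : TensorSpace d p g n) S' =
            Metric.infDist (T : TensorSpace d p g n) (rankOneSet d p g n) →
          S' = S := by
  have hn' : ∀ i, 0 < n (g i) := fun i => hn (g i)
  refine ⟨fun T hT => exists_best_rankOne_approx_mem_omegaSymRankOne hd hn' hT, ?_⟩
  have hlip : LipschitzWith 1 fun u : Somega d p g n =>
      Metric.infDist (u : TensorSpace d p g n) (rankOneSet d p g n) :=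
    ((Metric.lipschitz_infDist_pt _).comp isometry_subtype_coe.lipschitz).weaken (mul_one _).le
  filter_upwards [hlip.ae_differentiableAt (μ := μ)] with T hT
  obtain ⟨S, hS, hTS, hSsym⟩ := exists_best_rankOne_approx_mem_omegaSymRankOne hd hn' T.2
  exact ⟨S, ⟨hS, hTS⟩, hSsym, fun S' hS' hTS' =>
    eq_of_dist_eq_infDist_of_differentiableAt (fun t _ => smul_mem_rankOneSet hd t) hT hS
      (mem_Somega_of_mem_omegaSymRankOne hSsym) hTS hS' hTS'⟩

/-- (i) Every `ω`-partially-symmetric tensor has a best rank one approximation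
which is `ω`-symmetric; (ii) for almost every `ω`-partially-symmetric tensor
the best rank one approximation is unique and `ω`-symmetric. -/
theorem best_rank_one_approx_omega_symmetric
    (d p : ℕ) (hd : 1 ≤ d) (hp : 1 ≤ p) (g : Fin d → Fin p)
    (hg : Function.Surjective g) (n : Fin p → ℕ) (hn : ∀ k, 1 ≤ n k)
    (μ : Measure (Somega d p g n)) [μ.IsAddHaarMeasure] :
    (∀ T ∈ Somega d p g n, ∃ S ∈ rankOneSet d p g n,
        dist T S = Metric.infDist T (rankOneSet d p g n) ∧
        S ∈ omegaSymRankOne d p g n) ∧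
      ∀ᵐ (T : Somega d p g n) ∂μ, ∃ S,
        (S ∈ rankOneSet d p g n ∧
          dist (T : TensorSpace d p g n) S =
            Metric.infDist (T : TensorSpace d p g n) (rankOneSet d p g n)) ∧
        S ∈ omegaSymRankOne d p g n ∧
        ∀ S', S' ∈ rankOneSet d p g n →
          dist (T : TensorSpace d p g n) S' =
            Metric.infDist (T : TensorSpace d p g n) (rankOneSet d p g n) →
          S' = S :=
  best_rank_one_approx_omega_symmetric_general d p hd g n hn μ
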